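/- Content of Theorems 1 and 2: for all integers a, b ≥ 1, every sequence c : ℕ → ℚ, and all n ≥ 1 and k ≥ 2, the quantity q_c(n,k) satisfies the convolution recurrence 2(k−1)·q_c(n,k) = (an + (b−2)k + 2)·∑_{ℓ=1}^{k−1} ∑_{m=ℓ}^{n−1} q_c(n−m, k−ℓ)·q_c(m, ℓ), where an + (b−2)k + 2 is computed in ℚ. (Together with the initial condition q_c(n,1) = c_n, this recurrence characterizes the number of colored partitions of a convex (an+(b−2)k+2)-gon by k−1 noncrossing diagonals into k polygons each with number of sides ≡ b (mod a), each (aj+b)-gon colorable in c_j ways.) -/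

import Mathlib

/-!
Put `N = an + (b-1)k` and `R_r(n,k) = (r/k)·C(N+r-1, k-1)·P_c(n,k)` (with `R_r(n,0) = [n = 0]`), so
that `q_c = R_1`. These are the coefficients of `B^r` for the series `B` with
`B = 1 + t·B^(b-1)·∑ c_j (x·B^a)^j`, hence `R_r ⋆ R_s = R_{r+s}` under convolution in `(n,k)`. We
prove this by induction on `k` and `s` from the recurrence
`R_{r+1}(n,k+1) = R_r(n,k+1) + ∑_j c_j R_{r+b-1+aj}(n-j,k)`, which comes down to Pascal's rule
and `n·P_c(n,k+1) = (k+1)·∑_j j·c_j·P_c(n-j,k)` (all parts of a composition have the same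
weighted mean). The double sum of the theorem is `R_1 ⋆ R_1 = R_2` without its two boundary
terms `ℓ = 0` and `ℓ = k`, i.e. `R_2(n,k) - 2R_1(n,k)`, and
`(N+2-k)·(R_2 - 2R_1) = 2(k-1)·R_1` is one more binomial identity.
-/

/-- Weighted composition sum `P_c(n,k) = ∑ c_{m_1}⋯c_{m_k}` over compositions of `n`
into `k` positive parts; equals `(k!/n!)·B_{n,k}(1!c_1, 2!c_2, …)`. -/
def Pc (c : ℕ → ℚ) (n k : ℕ) : ℚ :=
  ∑ f ∈ (Finset.Nat.antidiagonalTuple k n).filter (fun f => ∀ i, 0 < f i),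
    ∏ i, c (f i)

/-- `q_c(n,k) = (1/(an+(b-1)k+1))·C(an+(b-1)k+1, k)·P_c(n,k)`. -/
def qc (a b : ℕ) (c : ℕ → ℚ) (n k : ℕ) : ℚ :=
  (1 / ((a * n + (b - 1) * k + 1 : ℕ) : ℚ)) *
    (((a * n + (b - 1) * k + 1).choose k : ℕ) : ℚ) * Pc c n k

open Finset

def compositions (n k : ℕ) : Finset (Fin k → ℕ) :=
  (Finset.Nat.antidiagonalTuple k n).filter (fun f => ∀ i, 0 < f i)

theorem mem_compositions {n k : ℕ} {f : Fin k → ℕ} :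
    f ∈ compositions n k ↔ ∑ i, f i = n ∧ ∀ i, 0 < f i := by
  simp [compositions, Finset.Nat.mem_antidiagonalTuple]

theorem Pc_eq_sum_compositions (c : ℕ → ℚ) (n k : ℕ) :
    Pc c n k = ∑ f ∈ compositions n k, ∏ i, c (f i) :=
  rfl

theorem Pc_zero_right (c : ℕ → ℚ) (n : ℕ) : Pc c n 0 = if n = 0 then 1 else 0 := by
  rcases n with _ | n <;> simp [Pc]

theorem Pc_eq_zero_of_lt (c : ℕ → ℚ) {n k : ℕ} (h : n < k) : Pc c n k = 0 := by
  refine sum_eq_zero fun f hf => absurd h (not_lt.2 ?_)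
  obtain ⟨hsum, hpos⟩ := mem_compositions.1 hf
  calc k = ∑ _i : Fin k, 1 := by simp
    _ ≤ ∑ i, f i := sum_le_sum fun i _ => hpos i
    _ = n := hsum

theorem sum_compositions_succ (c g : ℕ → ℚ) (n k : ℕ) :
    ∑ f ∈ compositions n (k + 1), g (f 0) * ∏ i, c (f i) =
      ∑ j ∈ Icc 1 n, g j * c j * Pc c (n - j) k := by
  simp_rw [Pc_eq_sum_compositions, mul_sum]
  rw [sum_sigma']
  refine sum_nbij' (fun f => ⟨f 0, Fin.tail f⟩) (fun p => Fin.cons p.1 p.2) ?_ ?_ ?_ ?_ ?_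
  · intro f hf
    obtain ⟨hsum, hpos⟩ := mem_compositions.1 hf
    rw [Fin.sum_univ_succ] at hsum
    simp only [mem_sigma, mem_Icc, mem_compositions]
    exact ⟨⟨hpos 0, by omega⟩, by simp only [Fin.tail]; omega, fun i => hpos i.succ⟩
  · rintro ⟨j, f⟩ hf
    simp only [mem_sigma, mem_Icc, mem_compositions] at hf
    obtain ⟨⟨hj, hjn⟩, hsum, hpos⟩ := hf
    refine mem_compositions.2 ⟨?_, fun i => ?_⟩
    · simp only [Fin.sum_cons, hsum]
      omega
    · cases i using Fin.cases
      · exact hj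
      · simp [hpos]
  · intro f _
    simp
  · rintro ⟨j, f⟩ _
    simp
  · intro f _
    rw [Fin.prod_univ_succ, mul_assoc]
    rfl

theorem Pc_succ (c : ℕ → ℚ) (n k : ℕ) :
    Pc c n (k + 1) = ∑ j ∈ Icc 1 n, c j * Pc c (n - j) k := by
  simpa [Pc_eq_sum_compositions] using sum_compositions_succ c 1 n k

theorem sum_compositions_apply_mul (c : ℕ → ℚ) (n k : ℕ) (i i' : Fin k) :
    ∑ f ∈ compositions n k, (f i : ℚ) * ∏ j, c (f j) =
      ∑ f ∈ compositions n k, (f i' : ℚ) * ∏ j, c (f j) := by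
  have hmem : ∀ f ∈ compositions n k, f ∘ Equiv.swap i i' ∈ compositions n k := by
    intro f hf
    obtain ⟨hsum, hpos⟩ := mem_compositions.1 hf
    exact mem_compositions.2 ⟨by rw [← hsum]; exact Equiv.sum_comp _ f, fun j => hpos _⟩
  refine sum_nbij' (· ∘ Equiv.swap i i') (· ∘ Equiv.swap i i') hmem hmem
    (fun f _ => by ext; simp) (fun f _ => by ext; simp) fun f _ => ?_
  simp only [Function.comp_apply, Equiv.swap_apply_right]
  rw [Equiv.prod_comp (Equiv.swap i i') fun j => c (f j)]

/-- The parts of a composition are exchangeable, so each has the same weighted mean `n / (k + 1)`. -/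
theorem natCast_mul_Pc_succ (c : ℕ → ℚ) (n k : ℕ) :
    (n : ℚ) * Pc c n (k + 1) = (k + 1) * ∑ j ∈ Icc 1 n, j * c j * Pc c (n - j) k := by
  rw [← sum_compositions_succ, Pc_eq_sum_compositions, mul_sum]
  calc ∑ f ∈ compositions n (k + 1), (n : ℚ) * ∏ i, c (f i)
      = ∑ i : Fin (k + 1), ∑ f ∈ compositions n (k + 1), (f i : ℚ) * ∏ j, c (f j) := by
        rw [sum_comm]
        refine sum_congr rfl fun f hf => ?_
        rw [← sum_mul, ← Nat.cast_sum, (mem_compositions.1 hf).1]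
    _ = (k + 1) * ∑ f ∈ compositions n (k + 1), (f 0 : ℚ) * ∏ j, c (f j) := by
        simp [sum_compositions_apply_mul c n (k + 1) _ 0]

theorem Nat.cast_choose_succ_mul {K : Type*} [Ring K] (n k : ℕ) :
    (n.choose (k + 1) : K) * (k + 1) = n.choose k * (n - k) := by
  rcases le_or_gt k n with h | h
  · have := congrArg (Nat.cast : ℕ → K) (Nat.choose_succ_right_eq n k)
    push_cast [Nat.cast_sub h] at this
    exact this
  · simp [Nat.choose_eq_zero_of_lt h, Nat.choose_eq_zero_of_lt (Nat.lt_succ_of_lt h)]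

theorem sum_antidiagonal_sum_Icc {M : Type*} [AddCommMonoid M] (n : ℕ) (F : ℕ → ℕ → ℕ → M) :
    ∑ p ∈ antidiagonal n, ∑ j ∈ Icc 1 p.2, F p.1 j (p.2 - j) =
      ∑ j ∈ Icc 1 n, ∑ p ∈ antidiagonal (n - j), F p.1 j p.2 := by
  rw [sum_sigma', sum_sigma']
  refine sum_nbij' (fun x => ⟨x.2, (x.1.1, x.1.2 - x.2)⟩)
    (fun x => ⟨(x.2.1, x.2.2 + x.1), x.1⟩) ?_ ?_ ?_ ?_ ?_
  · rintro ⟨⟨p₁, p₂⟩, j⟩ hx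
    simp only [mem_sigma, HasAntidiagonal.mem_antidiagonal, mem_Icc] at hx ⊢
    omega
  · rintro ⟨j, p₁, p₂⟩ hx
    simp only [mem_sigma, HasAntidiagonal.mem_antidiagonal, mem_Icc] at hx ⊢
    omega
  · rintro ⟨⟨p₁, p₂⟩, j⟩ hx
    simp only [mem_sigma, HasAntidiagonal.mem_antidiagonal, mem_Icc] at hx
    simp only [Nat.sub_add_cancel hx.2.2]
  · rintro ⟨j, p₁, p₂⟩ _
    simp
  · rintro ⟨⟨p₁, p₂⟩, j⟩ _
    rfl

/-- `raney a β c r n k` is the coefficient of `xⁿ tᵏ` in `B ^ r`, where the bivariate series `B`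
solves `B = 1 + t B ^ β ∑ⱼ cⱼ (x B ^ a) ^ j` (Lagrange inversion). For `r = 0` the truncated
`r - 1` is harmless, being multiplied by `r`. -/
noncomputable def raney (a β : ℕ) (c : ℕ → ℚ) (r n : ℕ) : ℕ → ℚ
  | 0 => Pc c n 0
  | k + 1 => r / (k + 1) * ((a * n + β * (k + 1) + r - 1).choose k : ℕ) * Pc c n (k + 1)

namespace raney

variable (a β : ℕ) (c : ℕ → ℚ)

theorem zero_right (r n : ℕ) : raney a β c r n 0 = if n = 0 then 1 else 0 :=
  Pc_zero_right c n

theorem zero_left_succ (n k : ℕ) : raney a β c 0 n (k + 1) = 0 := by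
  simp [raney]

theorem eq_zero_of_lt (r : ℕ) {n k : ℕ} (h : n < k) : raney a β c r n k = 0 := by
  obtain ⟨k, rfl⟩ := Nat.exists_eq_succ_of_ne_zero (Nat.ne_zero_of_lt h)
  simp [raney, Pc_eq_zero_of_lt c h]

theorem coeff_succ_succ (N r m : ℕ) :
    ((r : ℚ) + 1) * (N + r).choose (m + 1) * (m + 1) =
      r * (N + r - 1).choose (m + 1) * (m + 1) + (N + r - 1).choose m * (N + r + r * (m + 1)) := by
  rcases Nat.eq_zero_or_eq_succ_pred (N + r) with h | h
  · obtain ⟨rfl, rfl⟩ : N = 0 ∧ r = 0 := by omega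
    simp
  · set Y := N + r - 1
    rw [h, Nat.choose_succ_succ, Nat.cast_add]
    have habs := Nat.cast_choose_succ_mul (K := ℚ) Y m
    have hY : ((N : ℚ) + r) = Y + 1 := by exact_mod_cast h
    rw [hY]
    linear_combination habs

theorem succ_succ (r n k : ℕ) :
    raney a β c (r + 1) n (k + 1) =
      raney a β c r n (k + 1) + ∑ j ∈ Icc 1 n, c j * raney a β c (r + β + a * j) (n - j) k := by
  rcases k with _ | m
  · simp only [raney, Pc_succ c n 0, Nat.choose_zero_right]
    push_cast
    ring
  · set N := a * n + β * (m + 2)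
    have hidx : ∀ j ∈ Icc 1 n, a * (n - j) + β * (m + 1) + (r + β + a * j) - 1 = N + r - 1 := by
      intro j hj
      have : a * (n - j) + a * j = a * n := by rw [← mul_add, Nat.sub_add_cancel (mem_Icc.1 hj).2]
      have : β * (m + 2) = β * (m + 1) + β := by ring
      omega
    simp only [raney]
    rw [sum_congr rfl fun j hj => by rw [hidx j hj]]
    have h0 := Pc_succ c n (m + 1)
    have h1 := natCast_mul_Pc_succ c n (m + 1)
    have h2 := coeff_succ_succ N r m
    have hN : (N : ℚ) = a * n + β * (m + 2) := by push_cast [N]; ring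
    have e1 : a * n + β * (m + 1 + 1) + (r + 1) - 1 = N + r := rfl
    have hsum : ∑ j ∈ Icc 1 n, c j * ((↑(r + β + a * j) : ℚ) / (↑m + 1) *
          ((N + r - 1).choose m : ℕ) * Pc c (n - j) (m + 1)) =
        ((N + r - 1).choose m : ℕ) / (m + 1) * ((r + β) * ∑ j ∈ Icc 1 n, c j * Pc c (n - j) (m + 1)
          + a * ∑ j ∈ Icc 1 n, j * c j * Pc c (n - j) (m + 1)) := by
      rw [mul_sum, mul_sum, ← sum_add_distrib, mul_sum]
      refine sum_congr rfl fun j _ => ?_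
      push_cast
      ring
    rw [e1, hsum, ← h0]
    push_cast at h1 ⊢
    field_simp
    linear_combination Pc c n (m + 2) * h2 + ((N + r - 1).choose m : ℚ) * a * h1
      + ((N + r - 1).choose m : ℚ) * Pc c n (m + 2) * hN

theorem sum_antidiagonal_mul_zero_right (F : ℕ → ℚ) (s n : ℕ) :
    ∑ q ∈ antidiagonal n, F q.1 * raney a β c s q.2 0 = F n := by
  rw [sum_eq_single (n, 0)]
  · simp [zero_right]
  · rintro ⟨q₁, q₂⟩ hq hne
    rw [HasAntidiagonal.mem_antidiagonal] at hq
    rw [zero_right, if_neg (by rintro rfl; simp_all), mul_zero]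
  · simp

theorem sum_antidiagonal_succ_mul (r s n k : ℕ) :
    ∑ p ∈ antidiagonal (k + 1), ∑ q ∈ antidiagonal n,
        raney a β c r q.1 p.1 * raney a β c s q.2 p.2 =
      raney a β c r n (k + 1) + ∑ p ∈ antidiagonal k, ∑ q ∈ antidiagonal n,
        raney a β c r q.1 p.1 * raney a β c s q.2 (p.2 + 1) := by
  rw [Nat.sum_antidiagonal_succ']
  exact congrArg (· + _) (sum_antidiagonal_mul_zero_right a β c (raney a β c r · (k + 1)) s n)

theorem sum_antidiagonal_mul (r k s n : ℕ) :
    ∑ p ∈ antidiagonal k, ∑ q ∈ antidiagonal n,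
        raney a β c r q.1 p.1 * raney a β c s q.2 p.2 =
      raney a β c (r + s) n k := by
  induction k generalizing s n with
  | zero =>
    rw [Nat.antidiagonal_zero, sum_singleton]
    exact sum_antidiagonal_mul_zero_right a β c (raney a β c r · 0) s n
  | succ k ih =>
    induction s generalizing n with
    | zero =>
      simp [sum_antidiagonal_succ_mul, zero_left_succ]
    | succ s ihs =>
      calc _ = raney a β c r n (k + 1) + ∑ p ∈ antidiagonal k, ∑ q ∈ antidiagonal n,
              raney a β c r q.1 p.1 * raney a β c s q.2 (p.2 + 1) +
            ∑ p ∈ antidiagonal k, ∑ q ∈ antidiagonal n, ∑ j ∈ Icc 1 q.2,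
              c j * (raney a β c r q.1 p.1 * raney a β c (s + β + a * j) (q.2 - j) p.2) := by
            rw [sum_antidiagonal_succ_mul, add_assoc, ← sum_add_distrib]
            congr 1
            refine sum_congr rfl fun p _ => ?_
            rw [← sum_add_distrib]
            refine sum_congr rfl fun q _ => ?_
            rw [succ_succ, mul_add, mul_sum]
            congr 1
            refine sum_congr rfl fun j _ => ?_
            ring
        _ = raney a β c (r + s) n (k + 1) +
            ∑ j ∈ Icc 1 n, c j * raney a β c (r + s + β + a * j) (n - j) k := by
            rw [← sum_antidiagonal_succ_mul, ihs]
            congr 1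
            rw [sum_congr rfl fun p _ => sum_antidiagonal_sum_Icc n fun q₁ j q₂ =>
              c j * (raney a β c r q₁ p.1 * raney a β c (s + β + a * j) q₂ p.2), sum_comm]
            refine sum_congr rfl fun j _ => ?_
            simp_rw [← mul_sum]
            rw [ih, ← Nat.add_assoc, ← Nat.add_assoc]
        _ = raney a β c (r + (s + 1)) n (k + 1) := (succ_succ a β c (r + s) n k).symm

theorem sum_Icc_sum_Icc_one_mul_one {k : ℕ} (hk : 1 ≤ k) (n : ℕ) :
    ∑ ℓ ∈ Icc 1 (k - 1), ∑ m ∈ Icc ℓ (n - 1), raney a β c 1 (n - m) (k - ℓ) * raney a β c 1 m ℓ =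
      raney a β c 2 n k - 2 * raney a β c 1 n k := by
  obtain ⟨t, rfl⟩ := Nat.exists_eq_add_of_le' hk
  set G : ℕ → ℚ := fun ℓ =>
    ∑ m ∈ range (n + 1), raney a β c 1 m ℓ * raney a β c 1 (n - m) (t + 1 - ℓ)
  have hfull : ∑ ℓ ∈ range (t + 2), G ℓ = raney a β c 2 n (t + 1) := by
    rw [← sum_antidiagonal_mul a β c 1 (t + 1) 1 n,
      Nat.sum_antidiagonal_eq_sum_range_succ fun i j => ∑ q ∈ antidiagonal n,
        raney a β c 1 q.1 i * raney a β c 1 q.2 j]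
    exact sum_congr rfl fun ℓ _ => (Nat.sum_antidiagonal_eq_sum_range_succ
      (fun i j => raney a β c 1 i ℓ * raney a β c 1 j (t + 1 - ℓ)) n).symm
  have hsplit : ∑ ℓ ∈ range (t + 2), G ℓ = G 0 + ∑ ℓ ∈ Icc 1 t, G ℓ + G (t + 1) := by
    rw [sum_range_succ, range_eq_Ico, sum_eq_sum_Ico_succ_bot (by omega)]
    rfl
  have hbot : G 0 = raney a β c 1 n (t + 1) := by
    simp [G, zero_right]
  have htop : G (t + 1) = raney a β c 1 n (t + 1) := by
    simp only [G]
    rw [sum_eq_single_of_mem n (self_mem_range_succ n)]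
    · simp [zero_right]
    · intro m hm hmn
      rw [mem_range] at hm
      simp [zero_right, show n - m ≠ 0 by omega]
  have hmid : ∀ ℓ ∈ Icc 1 t, ∑ m ∈ Icc ℓ (n - 1),
      raney a β c 1 (n - m) (t + 1 - ℓ) * raney a β c 1 m ℓ = G ℓ := by
    intro ℓ hℓ
    rw [mem_Icc] at hℓ
    refine sum_subset_zero_on_sdiff (fun m hm => ?_) (fun m hm => ?_) (fun m _ => mul_comm _ _)
    · simp only [mem_Icc, mem_range] at hm ⊢
      omega
    · simp only [mem_sdiff, mem_range, mem_Icc, not_and_or, not_le] at hm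
      rcases hm with ⟨hmn, hmℓ | hmn'⟩
      · rw [eq_zero_of_lt a β c 1 hmℓ, zero_mul]
      · rw [eq_zero_of_lt a β c 1 (show n - m < t + 1 - ℓ by omega), mul_zero]
  rw [Nat.add_sub_cancel, sum_congr rfl hmid]
  linarith

end raney

theorem qc_eq_raney (a b : ℕ) (c : ℕ → ℚ) : qc a b c = raney a (b - 1) c 1 := by
  funext n k
  rcases k with _ | k
  · rcases n with _ | n <;> simp [qc, raney, Pc_zero_right]
  · have h := Nat.add_one_mul_choose_eq (a * n + (b - 1) * (k + 1)) k
    simp only [qc, raney, Nat.add_sub_cancel]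
    rw [← Nat.cast_inj (R := ℚ)] at h
    push_cast at h ⊢
    field_simp
    linear_combination -Pc c n (k + 1) * h

theorem qc_recurrence_general (a b : ℕ) (hb : 1 ≤ b) (c : ℕ → ℚ)
    (n k : ℕ) (hk : 2 ≤ k) :
    2 * ((k : ℚ) - 1) * qc a b c n k =
      ((a : ℚ) * n + ((b : ℚ) - 2) * k + 2) *
        ∑ ℓ ∈ Finset.Icc 1 (k - 1), ∑ m ∈ Finset.Icc ℓ (n - 1),
          qc a b c (n - m) (k - ℓ) * qc a b c m ℓ := by
  rw [qc_eq_raney, raney.sum_Icc_sum_Icc_one_mul_one a (b - 1) c (by omega)]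
  obtain ⟨t, rfl⟩ := Nat.exists_eq_add_of_le' hk
  simp only [raney, Nat.add_sub_cancel]
  set N := a * n + (b - 1) * (t + 1 + 1)
  have hN : (N : ℚ) = a * n + (b - 1) * (t + 2) := by push_cast [N, Nat.cast_sub hb]; ring
  have hpascal : ((N + 1).choose (t + 1) : ℚ) = N.choose t + N.choose (t + 1) := by
    rw [Nat.choose_succ_succ, Nat.cast_add]
  have habs := Nat.cast_choose_succ_mul (K := ℚ) N t
  rw [show N + 2 - 1 = N + 1 from rfl, hpascal]
  push_cast
  field_simp
  linear_combination Pc c n (t + 2) * habs + (N.choose t : ℚ) * Pc c n (t + 2) * hN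

/-- Theorems 1 and 2: the convolution recurrence for the number of colored polygon
partitions into polygons with number of sides `≡ b (mod a)`. -/
theorem qc_recurrence (a b : ℕ) (ha : 1 ≤ a) (hb : 1 ≤ b) (c : ℕ → ℚ)
    (n k : ℕ) (hn : 1 ≤ n) (hk : 2 ≤ k) :
    2 * ((k : ℚ) - 1) * qc a b c n k =
      ((a : ℚ) * n + ((b : ℚ) - 2) * k + 2) *
        ∑ ℓ ∈ Finset.Icc 1 (k - 1), ∑ m ∈ Finset.Icc ℓ (n - 1),
          qc a b c (n - m) (k - ℓ) * qc a b c m ℓ :=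
  qc_recurrence_general a b hb c n k hk
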